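/- Fix t > 0. Suppose that E[Σ_{r=1}^{τ_N(t)} c_N(r)^2] → 0 as N → ∞. Then for any l ∈ ℕ, P[τ_N(t) ≥ l] → 1 as N → ∞. -/

import Mathlib

open MeasureTheory Filter Finset

/-- Conditional pair merger probability `c_N = (1/(N)_2) Σ_{i<N} (ν_i)_2` for an
offspring vector encoded as `ν : ℕ → ℕ` (components `0,…,N-1`). -/
noncomputable def cN (N : ℕ) (ν : ℕ → ℕ) : ℝ :=
  (∑ i ∈ Finset.range N, ((ν i).descFactorial 2 : ℝ)) / (N.descFactorial 2 : ℝ)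

/-- Multiple-merger bound `D_N = (1/(N (N)_2)) Σ_i (ν_i)_2 [ν_i + (1/N) Σ_{j≠i} ν_j²]`. -/
noncomputable def DN (N : ℕ) (ν : ℕ → ℕ) : ℝ :=
  (∑ i ∈ Finset.range N, ((ν i).descFactorial 2 : ℝ) *
      ((ν i : ℝ) + (∑ j ∈ (Finset.range N).erase i, ((ν j : ℝ)) ^ 2) / (N : ℝ))) /
    ((N : ℝ) * (N.descFactorial 2 : ℝ))

/-- The time change `τ(t) = inf{s ∈ ℕ : Σ_{r=1}^s c(r) ≥ t}`. -/
noncomputable def tauOf (c : ℕ → ℝ) (t : ℝ) : ℕ :=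
  sInf {s : ℕ | t ≤ ∑ r ∈ Finset.Icc 1 s, c r}

/-- The random time change `τ_N(t)` built from the offspring counts
`ν N t ω i` (population size `N`, generation `t`, individual `i`). -/
noncomputable def tauN {Ω : Type*} (ν : ℕ → ℕ → Ω → ℕ → ℕ) (N : ℕ) (t : ℝ) (ω : Ω) : ℕ :=
  tauOf (fun r => cN N (ν N r ω)) t

/-!
Since the partial sums of `c_N` first reach `t` at time `τ = τ_N(t)`, Cauchy–Schwarz gives
`t² ≤ τ · Σ_{r ≤ τ} c_N(r)²`. Hence on `{τ < l}` the sum of squares is at least `t² / (l + 1)`, and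
Markov's inequality bounds `P[τ < l]` by `(l + 1) / t² · E[Σ_{r ≤ τ} c_N(r)²] → 0`. The expectation
is that of a bounded variable: `Σ ν = N` forces `c_N ≤ 1`, so the sum of squares is at most `t + 1`.
-/

open Topology

theorem Measurable.apply_index {Ω ι β : Type*} [MeasurableSpace Ω] [MeasurableSpace ι]
    [Countable ι] [MeasurableSingletonClass ι] [MeasurableSpace β] {F : ι → Ω → β} {τ : Ω → ι}
    (hF : ∀ i, Measurable (F i)) (hτ : Measurable τ) : Measurable fun ω => F (τ ω) ω :=
  (measurable_from_prod_countable_left (f := fun p : Ω × ι => F p.2 p.1) hF).comp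
    (measurable_id.prodMk hτ)

theorem tendsto_measure_setOf_le_of_tendsto_integral {Ω ι : Type*} [MeasurableSpace Ω] {μ : Measure Ω}
    [IsFiniteMeasure μ] {l : Filter ι} {X : ι → Ω → ℝ} (hX : ∀ i, 0 ≤ᵐ[μ] X i)
    (hint : ∀ i, Integrable (X i) μ) (hlim : Tendsto (fun i => ∫ ω, X i ω ∂μ) l (𝓝 0))
    {ε : ℝ} (hε : 0 < ε) : Tendsto (fun i => μ {ω | ε ≤ X i ω}) l (𝓝 0) := by
  have hreal : Tendsto (fun i => μ.real {ω | ε ≤ X i ω}) l (𝓝 0) :=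
    squeeze_zero (fun _ => measureReal_nonneg)
      (fun i => (le_div_iff₀' hε).2 (mul_meas_ge_le_integral_of_nonneg (hX i) (hint i) ε))
      (by simpa using hlim.div_const ε)
  exact (ENNReal.tendsto_toReal_iff (fun _ => measure_ne_top _ _) ENNReal.zero_ne_top).1 hreal

section cN

variable {N : ℕ} {ν : ℕ → ℕ}

theorem cN_nonneg : 0 ≤ cN N ν := by
  unfold cN
  positivity

theorem cN_le_one (hν : ∑ i ∈ range N, ν i = N) : cN N ν ≤ 1 := by
  have hνle : ∀ i ∈ range N, ν i ≤ N := fun i hi =>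
    hν ▸ single_le_sum (fun j _ => Nat.zero_le (ν j)) hi
  refine div_le_one_of_le₀ ?_ (Nat.cast_nonneg _)
  calc ∑ i ∈ range N, ((ν i).descFactorial 2 : ℝ)
      = ∑ i ∈ range N, (ν i : ℝ) * (ν i - 1) := by simp only [Nat.cast_descFactorial_two]
    _ ≤ ∑ i ∈ range N, (ν i : ℝ) * (N - 1) :=
        sum_le_sum fun i hi => by gcongr; exact hνle i hi
    _ = (N.descFactorial 2 : ℝ) := by
        rw [← sum_mul, ← Nat.cast_sum, hν, Nat.cast_descFactorial_two]

theorem measurable_cN {Ω : Type*} [MeasurableSpace Ω] (N : ℕ) {ν : Ω → ℕ → ℕ}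
    (hν : ∀ i, Measurable fun ω => ν ω i) : Measurable fun ω => cN N (ν ω) := by
  unfold cN
  fun_prop

end cN

section tauOf

variable {c : ℕ → ℝ} {t : ℝ}

theorem le_sum_Icc_tauOf (hne : ∃ s, t ≤ ∑ r ∈ Icc 1 s, c r) :
    t ≤ ∑ r ∈ Icc 1 (tauOf c t), c r :=
  Nat.sInf_mem hne

theorem tauOf_le_iff {n : ℕ} :
    tauOf c t ≤ n ↔ (∃ k ≤ n, t ≤ ∑ r ∈ Icc 1 k, c r) ∨ ∀ s, ∑ r ∈ Icc 1 s, c r < t := by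
  constructor
  · intro h
    by_cases hne : ∃ s, t ≤ ∑ r ∈ Icc 1 s, c r
    · exact Or.inl ⟨_, h, le_sum_Icc_tauOf hne⟩
    · push Not at hne
      exact Or.inr hne
  · rintro (⟨k, hkn, hk⟩ | hempty)
    · exact (Nat.sInf_le hk).trans hkn
    · have : {s : ℕ | t ≤ ∑ r ∈ Icc 1 s, c r} = ∅ :=
        Set.eq_empty_of_forall_notMem fun s hs => (hempty s).not_ge hs
      simp [tauOf, this]

theorem sum_Icc_tauOf_le {b : ℝ} (hc : ∀ r, c r ≤ b) (ht : 0 ≤ t) (hb : 0 ≤ b) :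
    ∑ r ∈ Icc 1 (tauOf c t), c r ≤ t + b := by
  rcases Nat.eq_zero_or_eq_succ_pred (tauOf c t) with h0 | hsucc
  · simpa [h0] using add_nonneg ht hb
  · set m := (tauOf c t).pred
    have hm : ∑ r ∈ Icc 1 m, c r < t :=
      not_le.1 (Nat.notMem_of_lt_sInf (s := {s | t ≤ ∑ r ∈ Icc 1 s, c r})
        (show m < tauOf c t by omega))
    rw [hsucc, sum_Icc_succ_top (Nat.le_add_left 1 m)]
    linarith [hc (m + 1)]

theorem sq_le_tauOf_mul_sum_sq (ht : 0 ≤ t) (hne : ∃ s, t ≤ ∑ r ∈ Icc 1 s, c r) :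
    t ^ 2 ≤ tauOf c t * ∑ r ∈ Icc 1 (tauOf c t), c r ^ 2 := by
  calc t ^ 2 ≤ (∑ r ∈ Icc 1 (tauOf c t), c r) ^ 2 := by gcongr; exact le_sum_Icc_tauOf hne
    _ ≤ #(Icc 1 (tauOf c t)) * ∑ r ∈ Icc 1 (tauOf c t), c r ^ 2 := sq_sum_le_card_mul_sum_sq
    _ = tauOf c t * ∑ r ∈ Icc 1 (tauOf c t), c r ^ 2 := by simp

theorem sq_div_succ_le_sum_sq_of_tauOf_le {l : ℕ} (ht : 0 ≤ t)
    (hne : ∃ s, t ≤ ∑ r ∈ Icc 1 s, c r) (hl : tauOf c t ≤ l) :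
    t ^ 2 / (l + 1) ≤ ∑ r ∈ Icc 1 (tauOf c t), c r ^ 2 := by
  rw [div_le_iff₀' (by positivity)]
  calc t ^ 2 ≤ tauOf c t * ∑ r ∈ Icc 1 (tauOf c t), c r ^ 2 := sq_le_tauOf_mul_sum_sq ht hne
    _ ≤ (l + 1) * ∑ r ∈ Icc 1 (tauOf c t), c r ^ 2 := by
        gcongr
        exact_mod_cast hl.trans (Nat.le_succ l)

theorem measurable_tauOf {Ω : Type*} [MeasurableSpace Ω] {c : ℕ → Ω → ℝ}
    (hc : ∀ r, Measurable (c r)) : Measurable fun ω => tauOf (fun r => c r ω) t := by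
  have hS : ∀ s, Measurable fun ω => ∑ r ∈ Icc 1 s, c r ω :=
    fun s => Finset.measurable_sum _ fun r _ => hc r
  refine measurable_of_Iic fun n => ?_
  simp only [Set.preimage, Set.mem_Iic, tauOf_le_iff]
  exact measurableSet_setOfPred.2 <| .or
    (.exists fun k => .and measurable_const (measurableSet_le measurable_const (hS k)).mem)
    (.forall fun s => (measurableSet_lt (hS s) measurable_const).mem)

end tauOf

section tauN

variable {Ω : Type*} [MeasurableSpace Ω] {ν : ℕ → ℕ → Ω → ℕ → ℕ} {t : ℝ}

theorem measurable_tauN (hmeas : ∀ N t i, Measurable fun ω => ν N t ω i) (N : ℕ) :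
    Measurable (tauN ν N t) :=
  measurable_tauOf fun r => measurable_cN N (hmeas N r)

theorem integrable_sum_sq_cN_tauN (μ : Measure Ω) [IsFiniteMeasure μ]
    (hmeas : ∀ N t i, Measurable fun ω => ν N t ω i)
    (hsum : ∀ N t ω, ∑ i ∈ range N, ν N t ω i = N) (ht : 0 ≤ t) (N : ℕ) :
    Integrable (fun ω => ∑ r ∈ Icc 1 (tauN ν N t ω), cN N (ν N r ω) ^ 2) μ := by
  have hmeasX : Measurable fun ω => ∑ r ∈ Icc 1 (tauN ν N t ω), cN N (ν N r ω) ^ 2 :=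
    Measurable.apply_index (F := fun s ω => ∑ r ∈ Icc 1 s, cN N (ν N r ω) ^ 2)
      (fun s => Finset.measurable_sum _ fun r _ => (measurable_cN N (hmeas N r)).pow_const 2)
      (measurable_tauN hmeas N)
  refine (integrable_const (t + 1)).mono' hmeasX.aestronglyMeasurable (ae_of_all _ fun ω => ?_)
  have hc0 : ∀ r, 0 ≤ cN N (ν N r ω) := fun r => cN_nonneg
  have hc1 : ∀ r, cN N (ν N r ω) ≤ 1 := fun r => cN_le_one (hsum N r ω)
  rw [Real.norm_of_nonneg (sum_nonneg fun r _ => sq_nonneg _)]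
  calc ∑ r ∈ Icc 1 (tauN ν N t ω), cN N (ν N r ω) ^ 2
      ≤ ∑ r ∈ Icc 1 (tauN ν N t ω), cN N (ν N r ω) :=
        sum_le_sum fun r _ => pow_le_of_le_one (hc0 r) (hc1 r) two_ne_zero
    _ ≤ t + 1 := sum_Icc_tauOf_le hc1 ht zero_le_one

end tauN

theorem stmt16 {Ω : Type*} [MeasurableSpace Ω] (μ : Measure Ω) [IsProbabilityMeasure μ]
    (ν : ℕ → ℕ → Ω → ℕ → ℕ)
    (hmeas : ∀ N t i, Measurable fun ω => ν N t ω i)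
    (hsum : ∀ N t ω, ∑ i ∈ Finset.range N, ν N t ω i = N)
    (t : ℝ) (ht : 0 < t)
    (hfin : ∀ᶠ N in atTop, ∀ᵐ ω ∂μ, ∃ s : ℕ, t ≤ ∑ r ∈ Finset.Icc 1 s, cN N (ν N r ω))
    (hc2 : Tendsto
      (fun N => ∫ ω, ∑ r ∈ Finset.Icc 1 (tauN ν N t ω), (cN N (ν N r ω)) ^ 2 ∂μ)
      atTop (nhds 0))
    (l : ℕ) :
    Tendsto (fun N => μ {ω | l ≤ tauN ν N t ω}) atTop (nhds 1) := by
  have hmarkov := tendsto_measure_setOf_le_of_tendsto_integral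
    (fun N => ae_of_all _ fun ω => sum_nonneg fun r _ => sq_nonneg (cN N (ν N r ω)))
    (integrable_sum_sq_cN_tauN μ hmeas hsum ht.le) hc2 (ε := t ^ 2 / (l + 1)) (by positivity)
  have hlt : Tendsto (fun N => μ {ω | tauN ν N t ω < l}) atTop (𝓝 0) := by
    refine tendsto_of_tendsto_of_tendsto_of_le_of_le' tendsto_const_nhds hmarkov
      (.of_forall fun _ => zero_le) ?_
    filter_upwards [hfin] with N hN
    refine measure_mono_ae ?_
    filter_upwards [hN] with ω hne (hτl : tauN ν N t ω < l)
    exact sq_div_succ_le_sum_sq_of_tauOf_le ht.le hne hτl.le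
  have hcompl : ∀ N, μ {ω | l ≤ tauN ν N t ω} = 1 - μ {ω | tauN ν N t ω < l} := fun N => by
    have hlt_meas : MeasurableSet {ω | tauN ν N t ω < l} := measurable_tauN hmeas N measurableSet_Iio
    rw [← prob_compl_eq_one_sub hlt_meas, Set.compl_ofPred]
    simp only [not_lt]
  simpa [hcompl] using ENNReal.Tendsto.sub tendsto_const_nhds hlt (.inl ENNReal.one_ne_top)
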